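/- arXiv:2309.05606 — 2 statements merged into one kernel-verified Lean document; each statement's English description precedes it below -/
import Mathlib

section
/- Let n ≥ m ≥ 3 and let e_1,...,e_k be nonnegative integers with e_1 + ... + e_k = C(n,2). If the sum over i of C(e_i,2) is strictly less than n(n-1)(n-2)/(m(m-1)(m-2)), then every edge colouring of K_n in which exactly e_i edges receive colour i contains a rainbow copy of the complete graph K_m. -/
/-- A colouring `c` of the edges of the complete graph on `Fin n` contains a rainbow copy
of `H` via the embedding `f` if the edges of `H` get pairwise distinct colours. -/
def IsRainbowCopy {α β : Type*} {n : ℕ} (H : SimpleGraph α) (c : Sym2 (Fin n) → β)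
    (f : α ↪ Fin n) : Prop :=
  ∀ a b a' b', H.Adj a b → H.Adj a' b' →
    c s(f a, f b) = c s(f a', f b') → s(a, b) = s(a', b')

/-- The colouring `c` contains a rainbow copy of `H`. -/
def HasRainbow {α β : Type*} {n : ℕ} (H : SimpleGraph α) (c : Sym2 (Fin n) → β) : Prop :=
  ∃ f : α ↪ Fin n, IsRainbowCopy H c f

/-- The colouring `c` of `K_n` uses exactly `e i` edges of colour `i`. -/
def ColourDistribution {n k : ℕ} (c : Sym2 (Fin n) → Fin k) (e : Fin k → ℕ) : Prop :=
  ∀ i : Fin k,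
    (Finset.univ.filter fun s : Sym2 (Fin n) => ¬ s.IsDiag ∧ c s = i).card = e i

/-- `gVal H k` is the least `N : ℕ∞` such that for every `n ≥ N` and every sequence
`(e_1, …, e_k)` of nonnegative integers summing to `C(n,2)` there is a rainbow `H`-free
colouring of `K_n` with exactly `e i` edges of colour `i`; it equals `⊤` when no finite
such `N` exists. -/
noncomputable def gVal {α : Type*} (H : SimpleGraph α) (k : ℕ) : ℕ∞ :=
  sInf {N : ℕ∞ | ∀ n : ℕ, N ≤ (n : ℕ∞) → ∀ e : Fin k → ℕ, (∑ i, e i) = n.choose 2 →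
    ∃ c : Sym2 (Fin n) → Fin k, ColourDistribution c e ∧ ¬ HasRainbow H c}

lemma aux_sq_sub (e : ℕ) : e * e - e = 2 * e.choose 2 := by
  induction e with
  | zero => simp
  | succ k ih =>
    have h1 : (k+1).choose 2 = k + k.choose 2 := by
      rw [Nat.choose_succ_succ, Nat.choose_one_right]
    have hk : k ≤ k * k := by nlinarith
    have h2 : (k+1) * (k+1) = k * k + 2 * k + 1 := by ring
    omega

lemma aux_choose_id (a b : ℕ) :
    (a+3).choose (b+3) * ((b+3) * (b+2) * (b+1))
      = (a+3) * (a+2) * (a+1) * a.choose b := by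
  have h1 := Nat.add_one_mul_choose_eq a b
  have h2 := Nat.add_one_mul_choose_eq (a+1) (b+1)
  have h3 := Nat.add_one_mul_choose_eq (a+2) (b+2)
  calc (a+3).choose (b+3) * ((b+3) * (b+2) * (b+1))
      = ((a+2+1).choose (b+2+1) * (b+2+1)) * (b+2) * (b+1) := by ring
    _ = ((a+3) * (a+2).choose (b+2)) * (b+2) * (b+1) := by rw [← h3]
    _ = (a+3) * (((a+1+1).choose (b+1+1) * (b+1+1)) * (b+1)) := by ring_nf
    _ = (a+3) * (((a+2) * (a+1).choose (b+1)) * (b+1)) := by rw [← h2]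
    _ = (a+3) * ((a+2) * ((a+1).choose (b+1) * (b+1))) := by ring
    _ = (a+3) * ((a+2) * ((a+1) * a.choose b)) := by rw [← h1]
    _ = (a+3) * (a+2) * (a+1) * a.choose b := by ring

lemma aux_card_superset {n m : ℕ} (A : Finset (Fin n)) (hA : A.card ≤ m) :
    ((Finset.powersetCard m (Finset.univ : Finset (Fin n))).filter fun T => A ⊆ T).card
      = (n - A.card).choose (m - A.card) := by
  classical
  have h1 : (Finset.univ \ A).card = n - A.card := by
    rw [Finset.card_sdiff_of_subset (Finset.subset_univ A), Finset.card_univ, Fintype.card_fin]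
  rw [← h1, ← Finset.card_powersetCard (m - A.card) (Finset.univ \ A)]
  apply Finset.card_bij' (i := fun T _ => T \ A) (j := fun S _ => S ∪ A)
  · intro T hT
    rw [Finset.mem_filter, Finset.mem_powersetCard] at hT
    rw [Finset.mem_powersetCard]
    refine ⟨Finset.sdiff_subset_sdiff (Finset.subset_univ T) le_rfl, ?_⟩
    rw [Finset.card_sdiff_of_subset hT.2, hT.1.2]
  · intro S hS
    rw [Finset.mem_powersetCard, Finset.subset_sdiff] at hS
    rw [Finset.mem_filter, Finset.mem_powersetCard]
    refine ⟨⟨Finset.subset_univ _, ?_⟩, Finset.subset_union_right⟩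
    rw [Finset.card_union_of_disjoint hS.1.2, hS.2]
    omega
  · intro T hT
    rw [Finset.mem_filter] at hT
    exact Finset.sdiff_union_of_subset hT.2
  · intro S hS
    rw [Finset.mem_powersetCard, Finset.subset_sdiff] at hS
    rw [Finset.union_sdiff_distrib, Finset.sdiff_self, Finset.union_empty,
      Finset.sdiff_eq_self_of_disjoint hS.1.2]

lemma aux_sym2_rep {α : Type*} (s : Sym2 α) : ∃ u v, s = s(u, v) := by
  induction s using Sym2.ind with
  | _ u v => exact ⟨u, v, rfl⟩

/-- If `n ≥ m ≥ 3`, `(e_1,…,e_k)` sums to `C(n,2)` and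
`∑ C(e_i,2) < n(n-1)(n-2)/(m(m-1)(m-2))`, then every colouring of `K_n` with exactly `e i`
edges of colour `i` contains a rainbow copy of `K_m`. -/
theorem stmt1 {n m k : ℕ} (hm : 3 ≤ m) (hnm : m ≤ n) (e : Fin k → ℕ)
    (hsum : ∑ i, e i = n.choose 2)
    (hlt : (∑ i, (e i).choose 2) * (m * (m - 1) * (m - 2)) < n * (n - 1) * (n - 2))
    (c : Sym2 (Fin n) → Fin k) (hc : ColourDistribution c e) :
    HasRainbow (⊤ : SimpleGraph (Fin m)) c := by
  classical
  by_contra hno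
  set S := ∑ i, (e i).choose 2 with hS
  set C3 := (n - 3).choose (m - 3) with hC3
  set Sub : Sym2 (Fin n) × Sym2 (Fin n) → Finset (Fin n) → Prop :=
    fun p T => (∀ x ∈ p.1, x ∈ T) ∧ (∀ x ∈ p.2, x ∈ T) with hSub
  set P : Finset (Sym2 (Fin n) × Sym2 (Fin n)) :=
    Finset.univ.filter fun p => ¬p.1.IsDiag ∧ ¬p.2.IsDiag ∧ p.1 ≠ p.2 ∧ c p.1 = c p.2 with hP
  set 𝒯 : Finset (Finset (Fin n)) := Finset.powersetCard m Finset.univ with hT𝒯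
  -- Step A : P.card = 2 * S
  have hA : P.card = 2 * S := by
    have h0 : P.card = ∑ i : Fin k, (P.filter fun p => c p.1 = i).card :=
      Finset.card_eq_sum_card_fiberwise (fun p _ => Finset.mem_univ _)
    have h1 : ∀ i : Fin k, (P.filter fun p => c p.1 = i).card = e i * e i - e i := by
      intro i
      set E : Finset (Sym2 (Fin n)) := Finset.univ.filter fun s => ¬s.IsDiag ∧ c s = i with hE
      have hEc : E.card = e i := hc i
      have heq : P.filter (fun p => c p.1 = i)
          = (E ×ˢ E).filter fun p => p.1 ≠ p.2 := by
        ext p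
        simp only [hP, hE, Finset.mem_filter, Finset.mem_univ, true_and,
          Finset.mem_product]
        constructor
        · rintro ⟨⟨hd1, hd2, hne, hcc⟩, hi⟩
          exact ⟨⟨⟨hd1, hi⟩, ⟨hd2, hcc ▸ hi⟩⟩, hne⟩
        · rintro ⟨⟨⟨hd1, hi1⟩, ⟨hd2, hi2⟩⟩, hne⟩
          exact ⟨⟨hd1, hd2, hne, hi1.trans hi2.symm⟩, hi1⟩
      have hdiag : ((E ×ˢ E).filter fun p => p.1 = p.2) = E.image fun x => (x, x) := by
        ext ⟨a, b⟩
        simp only [Finset.mem_filter, Finset.mem_product, Finset.mem_image]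
        constructor
        · rintro ⟨⟨ha, hb⟩, h⟩; exact ⟨a, ha, by simp [h]⟩
        · rintro ⟨x, hx, h⟩
          obtain ⟨rfl, rfl⟩ := Prod.mk.injEq .. ▸ h
          exact ⟨⟨hx, hx⟩, rfl⟩
      have hdc : ((E ×ˢ E).filter fun p => p.1 = p.2).card = e i := by
        rw [hdiag, Finset.card_image_of_injective _ (fun a b h => (Prod.mk.injEq .. ▸ h).1), hEc]
      have htot := Finset.card_filter_add_card_filter_not
        (s := E ×ˢ E) (p := fun p => p.1 = p.2)
      rw [Finset.card_product, hEc] at htot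
      have : ((E ×ˢ E).filter fun p => ¬ p.1 = p.2).card = e i * e i - e i := by omega
      rw [heq]
      convert this using 2
    rw [h0]
    simp_rw [h1, aux_sq_sub]
    rw [← Finset.mul_sum]
  -- Step B : each m-set contains two distinct edges of the same colour
  have hB : ∀ T ∈ 𝒯, 2 ≤ (P.filter fun p => Sub p T).card := by
    intro T hT
    rw [hT𝒯, Finset.mem_powersetCard] at hT
    set g := (Finset.equivFinOfCardEq hT.2).symm with hg
    set f : Fin m ↪ Fin n :=
      ⟨fun i => (g i : Fin n), fun i j h => g.injective (Subtype.ext h)⟩ with hf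
    have hfT : ∀ i, f i ∈ T := fun i => (g i).2
    have hnr : ¬ IsRainbowCopy (⊤ : SimpleGraph (Fin m)) c f := fun h => hno ⟨f, h⟩
    unfold IsRainbowCopy at hnr
    push_neg at hnr
    obtain ⟨a, b, a', b', hab, hab', hcc, hne⟩ := hnr
    rw [SimpleGraph.top_adj] at hab hab'
    set s := s(f a, f b) with hs
    set t := s(f a', f b') with ht
    have hst : s ≠ t := by
      intro h
      apply hne
      apply Sym2.map.injective f.injective
      rw [Sym2.map_pair_eq, Sym2.map_pair_eq]
      exact h
    have hsP : (s, t) ∈ P.filter fun p => Sub p T := by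
      rw [Finset.mem_filter, hP, Finset.mem_filter]
      refine ⟨⟨Finset.mem_univ _, ?_, ?_, hst, hcc⟩, ?_, ?_⟩
      · rw [hs, Sym2.mk_isDiag_iff]; exact fun h => hab (f.injective h)
      · rw [ht, Sym2.mk_isDiag_iff]; exact fun h => hab' (f.injective h)
      · intro x hx; rw [hs, Sym2.mem_iff] at hx
        rcases hx with rfl | rfl <;> exact hfT _
      · intro x hx; rw [ht, Sym2.mem_iff] at hx
        rcases hx with rfl | rfl <;> exact hfT _
    have htP : (t, s) ∈ P.filter fun p => Sub p T := by
      rw [Finset.mem_filter, hP, Finset.mem_filter] at hsP ⊢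
      obtain ⟨⟨_, hd1, hd2, hne', hcc'⟩, hm1, hm2⟩ := hsP
      exact ⟨⟨Finset.mem_univ _, hd2, hd1, hne'.symm, hcc'.symm⟩, hm2, hm1⟩
    have hsub : ({(s, t), (t, s)} : Finset _) ⊆ P.filter fun p => Sub p T := by
      intro p hp
      rw [Finset.mem_insert, Finset.mem_singleton] at hp
      rcases hp with rfl | rfl
      · exact hsP
      · exact htP
    have hcard2 : ({(s, t), (t, s)} : Finset (Sym2 (Fin n) × Sym2 (Fin n))).card = 2 := by
      rw [Finset.card_insert_of_notMem (by simp [hst]), Finset.card_singleton]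
    rw [← hcard2]
    exact Finset.card_le_card hsub
  -- Step C : fibre bound
  have hCstep : ∀ p ∈ P, (𝒯.filter fun T => Sub p T).card ≤ C3 := by
    intro p hp
    rw [hP, Finset.mem_filter] at hp
    obtain ⟨-, hd1, hd2, hne, -⟩ := hp
    obtain ⟨u, v, huv⟩ := aux_sym2_rep p.1
    obtain ⟨w, x, hwx⟩ := aux_sym2_rep p.2
    have huv' : u ≠ v := by rw [huv, Sym2.mk_isDiag_iff] at hd1; exact hd1
    have hwx' : w ≠ x := by rw [hwx, Sym2.mk_isDiag_iff] at hd2; exact hd2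
    have hz : ∃ z, z ∈ p.2 ∧ z ≠ u ∧ z ≠ v := by
      by_cases hw1 : w = u
      · subst hw1
        refine ⟨x, ?_, ?_, ?_⟩
        · rw [hwx]; exact Sym2.mem_mk_right _ _
        · exact fun h => hwx' h.symm
        · intro h; apply hne; rw [huv, hwx, h]
      · by_cases hw2 : w = v
        · subst hw2
          refine ⟨x, ?_, ?_, ?_⟩
          · rw [hwx]; exact Sym2.mem_mk_right _ _
          · intro h; apply hne; rw [huv, hwx, h, Sym2.eq_swap]
          · exact fun h => hwx' h.symm
        · exact ⟨w, by rw [hwx]; exact Sym2.mem_mk_left _ _, hw1, hw2⟩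
    obtain ⟨z, hzmem, hzu, hzv⟩ := hz
    have hsub : (𝒯.filter fun T => Sub p T) ⊆
        𝒯.filter fun T => ({u, v, z} : Finset (Fin n)) ⊆ T := by
      intro T hT
      rw [Finset.mem_filter] at hT ⊢
      refine ⟨hT.1, ?_⟩
      intro y hy
      simp only [Finset.mem_insert, Finset.mem_singleton] at hy
      rcases hy with rfl | rfl | rfl
      · exact hT.2.1 y (by rw [huv]; exact Sym2.mem_mk_left _ _)
      · exact hT.2.1 y (by rw [huv]; exact Sym2.mem_mk_right _ _)
      · exact hT.2.2 y hzmem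
    have hcard3 : ({u, v, z} : Finset (Fin n)).card = 3 := by
      rw [Finset.card_insert_of_notMem (by simp [huv', hzu.symm, hzv.symm]),
        Finset.card_insert_of_notMem (by simp [hzv.symm]), Finset.card_singleton]
    calc (𝒯.filter fun T => Sub p T).card
        ≤ (𝒯.filter fun T => ({u, v, z} : Finset (Fin n)) ⊆ T).card :=
          Finset.card_le_card hsub
      _ = C3 := by
          rw [hT𝒯, aux_card_superset _ (by rw [hcard3]; exact hm), hcard3]
  -- Step D : double counting
  have hlow : 2 * n.choose m ≤ ∑ T ∈ 𝒯, (P.filter fun p => Sub p T).card := by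
    calc 2 * n.choose m = ∑ _T ∈ 𝒯, 2 := by
          rw [Finset.sum_const, smul_eq_mul, hT𝒯, Finset.card_powersetCard,
            Finset.card_univ, Fintype.card_fin, mul_comm]
      _ ≤ _ := Finset.sum_le_sum hB
  have hswap : ∑ T ∈ 𝒯, (P.filter fun p => Sub p T).card
      = ∑ p ∈ P, (𝒯.filter fun T => Sub p T).card := by
    simp_rw [Finset.card_filter]
    exact Finset.sum_comm
  have hup : ∑ p ∈ P, (𝒯.filter fun T => Sub p T).card ≤ 2 * S * C3 := by
    calc ∑ p ∈ P, (𝒯.filter fun T => Sub p T).card ≤ ∑ _p ∈ P, C3 :=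
          Finset.sum_le_sum hCstep
      _ = P.card * C3 := by rw [Finset.sum_const, smul_eq_mul]
      _ = 2 * S * C3 := by rw [hA]
  have hkey : n.choose m ≤ S * C3 := by
    have h := hlow.trans (hswap ▸ hup)
    rw [mul_assoc] at h
    exact Nat.le_of_mul_le_mul_left h (by norm_num)
  -- Step E : arithmetic contradiction
  obtain ⟨b, rfl⟩ : ∃ b, m = b + 3 := ⟨m - 3, by omega⟩
  obtain ⟨a, rfl⟩ : ∃ a, n = a + 3 := ⟨n - 3, by omega⟩
  have hC3' : C3 = a.choose b := by rw [hC3]; norm_num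
  have hid := aux_choose_id a b
  have hCpos : 0 < a.choose b := Nat.choose_pos (by omega)
  have hlt' : S * ((b+3)*(b+2)*(b+1)) < (a+3)*(a+2)*(a+1) := by
    have e1 : b + 3 - 1 = b + 2 := by omega
    have e2 : b + 3 - 2 = b + 1 := by omega
    have e3 : a + 3 - 1 = a + 2 := by omega
    have e4 : a + 3 - 2 = a + 1 := by omega
    rw [e1, e2, e3, e4] at hlt
    exact hlt
  have h1 : (a+3).choose (b+3) * ((b+3)*(b+2)*(b+1))
      ≤ S * a.choose b * ((b+3)*(b+2)*(b+1)) :=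
    Nat.mul_le_mul_right _ (hC3' ▸ hkey)
  rw [hid] at h1
  have h2 : S * a.choose b * ((b+3)*(b+2)*(b+1))
      < (a+3)*(a+2)*(a+1) * a.choose b := by
    calc S * a.choose b * ((b+3)*(b+2)*(b+1))
        = S * ((b+3)*(b+2)*(b+1)) * a.choose b := by ring
      _ < (a+3)*(a+2)*(a+1) * a.choose b := (Nat.mul_lt_mul_right hCpos).mpr hlt'
  exact absurd (h1.trans_lt h2) (lt_irrefl _)
end

section
/- Suppose nonnegative integers f_1,...,f_k satisfy f_1 + ... + f_k ≥ C(m,2) + min{(k^2-k)/2, km} for some m ≥ 2. Then one can iteratively, for t = 0,1,...,m-2, at each step find a colour i whose remaining budget is at least m-t-1 and subtract m-t-1 from it; i.e., m-1 consecutive simple colouring steps can be performed on K_m. -/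
lemma exists_big {k n : ℕ} (f : Fin k → ℕ)
    (hsum : (n + 1 + 1).choose 2 + min ((k ^ 2 - k) / 2) (k * (n + 1 + 1)) ≤ ∑ i, f i) :
    ∃ i, n + 1 ≤ f i := by
  by_contra h
  push_neg at h
  have hle : ∑ i, f i ≤ k * n := by
    calc ∑ i, f i ≤ ∑ _i : Fin k, n := Finset.sum_le_sum fun i _ => by have := h i; omega
    _ = k * n := by simp [mul_comm]
  have hch2 : 2 * ((n + 1 + 1).choose 2) = (n + 1 + 1) * (n + 1) := by
    rw [Nat.choose_two_right]
    have h1 : n + 1 + 1 - 1 = n + 1 := rfl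
    rw [h1]
    obtain ⟨r, hr⟩ : Even ((n + 1 + 1) * (n + 1)) := by
      simpa [mul_comm] using Nat.even_mul_succ_self (n + 1)
    omega
  rcases le_or_gt ((k ^ 2 - k) / 2) (k * (n + 1 + 1)) with hmin | hmin
  · rw [min_eq_left hmin] at hsum
    rcases Nat.eq_zero_or_pos k with rfl | hk
    · have h0 : (∑ i, f i) = 0 := by simp
      have hch : 1 ≤ (n + 1 + 1).choose 2 := Nat.choose_pos (by omega)
      rw [h0] at hsum
      norm_num at hsum
      omega
    · have hkk : k ≤ k ^ 2 := Nat.le_self_pow two_ne_zero k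
      have hke : Even (k ^ 2 - k) := (Nat.even_sub hkk).2 (by simp [Nat.even_pow])
      have hB : 2 * ((k ^ 2 - k) / 2) + k = k ^ 2 := by
        have := hke.two_dvd
        omega
      have key : k * n < (n + 1 + 1).choose 2 + (k ^ 2 - k) / 2 := by
        zify at hch2 hB ⊢
        nlinarith [sq_nonneg ((n : ℤ) + 1 - k), hk]
      omega
  · rw [min_eq_right hmin.le] at hsum
    have hch : 1 ≤ (n + 1 + 1).choose 2 := Nat.choose_pos (by omega)
    have hmul : k * (n + 1 + 1) = k * n + 2 * k := by ring
    omega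

lemma aux_steps (k : ℕ) : ∀ n (f : Fin k → ℕ),
    (n + 1).choose 2 + min ((k ^ 2 - k) / 2) (k * (n + 1)) ≤ ∑ i, f i →
    ∃ g : Fin n → Fin k, ∀ i : Fin k,
      ∑ t ∈ Finset.univ.filter (fun t => g t = i), (n - (t : ℕ)) ≤ f i := by
  intro n
  induction n with
  | zero =>
    intro f _
    exact ⟨Fin.elim0, fun i => by simp⟩
  | succ n ih =>
    intro f hsum
    obtain ⟨i, hi⟩ := exists_big f hsum
    set f' : Fin k → ℕ := Function.update f i (f i - (n + 1)) with hf'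
    have hsum' : (n + 1).choose 2 + min ((k ^ 2 - k) / 2) (k * (n + 1)) ≤ ∑ j, f' j := by
      have hs : ∑ j, f' j + (n + 1) = ∑ j, f j := by
        rw [hf', Finset.sum_update_of_mem (Finset.mem_univ i)]
        have h2 : ∑ j, f j = f i + ∑ j ∈ Finset.univ \ {i}, f j := by
          rw [Finset.sum_eq_sum_sdiff_singleton_add (Finset.mem_univ i) f]
          omega
        omega
      have hcho : (n + 1 + 1).choose 2 = (n + 1).choose 2 + (n + 1) := by
        rw [Nat.choose_succ_succ (n + 1) 1, Nat.choose_one_right, Nat.add_comm]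
      have hmm : min ((k ^ 2 - k) / 2) (k * (n + 1)) ≤ min ((k ^ 2 - k) / 2) (k * (n + 1 + 1)) :=
        min_le_min le_rfl (Nat.mul_le_mul_left k (by omega))
      omega
    obtain ⟨g', hg'⟩ := ih f' hsum'
    refine ⟨Fin.cases i g', fun j => ?_⟩
    have key : ∑ t ∈ Finset.univ.filter (fun t => Fin.cases i g' t = j), (n + 1 - (t : ℕ))
        = (if i = j then n + 1 else 0)
          + ∑ t ∈ Finset.univ.filter (fun t => g' t = j), (n - (t : ℕ)) := by
      rw [Finset.sum_filter, Finset.sum_filter, Fin.sum_univ_succ]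
      simp [Nat.succ_sub_succ]
    rw [key]
    by_cases hj : i = j
    · subst hj
      have h3 := hg' i
      rw [hf', Function.update_self] at h3
      rw [if_pos rfl]
      omega
    · have h3 := hg' j
      rw [hf', Function.update_of_ne (Ne.symm hj)] at h3
      rw [if_neg hj]
      omega

/-- If `f_1 + ⋯ + f_k ≥ C(m,2) + min((k²-k)/2, km)` with `m ≥ 2`, then `m-1` consecutive
simple colouring steps can be performed on `K_m`: there is an assignment `g` of a colour to
each step `t = 0,…,m-2` (the step on `K_{m-t}`, costing `m-t-1`) such that the total cost
assigned to each colour `i` is at most `f i`. -/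
theorem stmt12 {k m : ℕ} (hm : 2 ≤ m) (f : Fin k → ℕ)
    (hsum : m.choose 2 + min ((k ^ 2 - k) / 2) (k * m) ≤ ∑ i, f i) :
    ∃ g : Fin (m - 1) → Fin k, ∀ i : Fin k,
      ∑ t ∈ Finset.univ.filter (fun t => g t = i), (m - 1 - (t : ℕ)) ≤ f i := by
  obtain ⟨n, rfl⟩ : ∃ n, m = n + 1 := ⟨m - 1, by omega⟩
  simp only [Nat.add_sub_cancel]
  exact aux_steps k n f hsum
end
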